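/- (Smoothing step in the proof of Theorem 6.2.) Let A, B ∈ ℝ and let E : (0, ∞) → ℝ be locally integrable and such that the function x ↦ E(x) + x·(A·log x + B) is nondecreasing on [3, ∞). Then there is a constant C > 0, depending only on A and B, such that for all x ≥ 3 and all H with 0 < H ≤ x: E(x) ≤ (1/H) ∫_x^{x+H} E(t) dt + C·H·log x, and, if moreover x − H ≥ 3, E(x) ≥ (1/H) ∫_{x−H}^{x} E(t) dt − C·H·log x. -/

import Mathlib

/-!
Write `g x = x (A log x + B)`. On `[3, 2x]` the slope of `g` is at most
`|A| (log (2x) + 1) + |B| ≤ C log x` with `C = 3|A| + |B| + 1`, so the monotonicity of `E + g`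
says that `E` can drop by at most `C H log x` over a step of length at most `H`. Hence `E` stays
above `E x - C H log x` on `(x, x + H]` and below `E x + C H log x` on `(x - H, x]`, and averaging
these pointwise bounds gives the two inequalities.
-/

open MeasureTheory Real Set

lemma mul_log_sub_mul_log_mem_Icc {s u : ℝ} (hs : 0 < s) (hsu : s ≤ u) (hu : 1 ≤ u) :
    u * log u - s * log s ∈ Icc 0 ((u - s) * (log u + 1)) := by
  have hlog_sub : log u - log s ≤ (u - s) / s := by
    have := log_le_sub_one_of_pos (div_pos (hs.trans_le hsu) hs)
    rwa [log_div (by positivity) hs.ne', div_sub_one hs.ne'] at this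
  have hs_mul : s * (log u - log s) ≤ u - s := by
    rwa [le_div_iff₀' hs] at hlog_sub
  have hlog_mono : log s ≤ log u := log_le_log hs hsu
  have hlog_u : 0 ≤ log u := log_nonneg hu
  constructor <;> nlinarith

lemma mul_affine_log_sub_le (A B : ℝ) {s u : ℝ} (hs : 0 < s) (hsu : s ≤ u) (hu : 1 ≤ u) :
    u * (A * log u + B) - s * (A * log s + B) ≤ (u - s) * (|A| * (log u + 1) + |B|) := by
  obtain ⟨hX₀, hX₁⟩ := mul_log_sub_mul_log_mem_Icc hs hsu hu
  have hA : A * (u * log u - s * log s) ≤ |A| * ((u - s) * (log u + 1)) :=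
    (mul_le_mul_of_nonneg_right (le_abs_self A) hX₀).trans
      (mul_le_mul_of_nonneg_left hX₁ (abs_nonneg A))
  have hB : B * (u - s) ≤ |B| * (u - s) :=
    mul_le_mul_of_nonneg_right (le_abs_self B) (sub_nonneg.mpr hsu)
  linarith

lemma one_le_log_of_three_le {x : ℝ} (hx : 3 ≤ x) : 1 ≤ log x := by
  rw [le_log_iff_exp_le (by linarith)]
  linarith [exp_one_lt_d9]

lemma abs_mul_log_add_abs_le {x u : ℝ} (A B : ℝ) (hx : 3 ≤ x) (hu : 0 < u) (hux : u ≤ 2 * x) :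
    |A| * (log u + 1) + |B| ≤ (3 * |A| + |B| + 1) * log x := by
  have hlog_x := one_le_log_of_three_le hx
  have hlog_u : log u ≤ 1 + log x := calc
    log u ≤ log (2 * x) := log_le_log hu hux
    _ = log 2 + log x := log_mul two_ne_zero (by positivity)
    _ ≤ 1 + log x := by linarith [log_two_lt_d9]
  have hA := abs_nonneg A
  have hB := abs_nonneg B
  nlinarith

lemma sub_le_of_monotoneOn_add_mul_affine_log {E : ℝ → ℝ} {A B : ℝ}
    (hmono : MonotoneOn (fun x => E x + x * (A * log x + B)) (Ici 3))
    {s u x H : ℝ} (hs : 3 ≤ s) (hsu : s ≤ u) (hus : u - s ≤ H) (hx : 3 ≤ x) (hux : u ≤ 2 * x) :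
    E s - E u ≤ (3 * |A| + |B| + 1) * H * log x := by
  have hEg : E s + s * (A * log s + B) ≤ E u + u * (A * log u + B) :=
    hmono (mem_Ici.mpr hs) (mem_Ici.mpr (hs.trans hsu)) hsu
  have hg := mul_affine_log_sub_le A B (by linarith) hsu (by linarith)
  have hslope := abs_mul_log_add_abs_le A B hx (by linarith) hux
  have hslope_nonneg : 0 ≤ |A| * (log u + 1) + |B| := by
    have := log_nonneg (show (1 : ℝ) ≤ u by linarith)
    positivity
  have hstep : (u - s) * (|A| * (log u + 1) + |B|) ≤ H * ((3 * |A| + |B| + 1) * log x) :=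
    mul_le_mul hus hslope hslope_nonneg ((sub_nonneg.mpr hsu).trans hus)
  linarith

lemma MeasureTheory.LocallyIntegrableOn.integrableOn_Ioc {f : ℝ → ℝ}
    (hf : LocallyIntegrableOn f (Ioi 0)) {a b : ℝ} (ha : 0 < a) : IntegrableOn f (Ioc a b) :=
  (hf.integrableOn_compact_subset (fun _ ht => ha.trans_le ht.1) isCompact_Icc).mono_set
    Ioc_subset_Icc_self

lemma le_one_div_mul_setIntegral_Ioc {f : ℝ → ℝ} {a b c : ℝ} (hab : a < b)
    (hf : IntegrableOn f (Ioc a b)) (hc : ∀ t ∈ Ioc a b, c ≤ f t) :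
    c ≤ 1 / (b - a) * ∫ t in Ioc a b, f t := by
  have := setIntegral_ge_of_const_le_real measurableSet_Ioc (by simp) hc hf
  rw [volume_real_Ioc_of_le hab.le] at this
  rw [one_div_mul_eq_div, le_div_iff₀ (sub_pos.mpr hab)]
  exact this

lemma one_div_mul_setIntegral_Ioc_le {f : ℝ → ℝ} {a b c : ℝ} (hab : a < b)
    (hf : IntegrableOn f (Ioc a b)) (hc : ∀ t ∈ Ioc a b, f t ≤ c) :
    1 / (b - a) * ∫ t in Ioc a b, f t ≤ c := by
  have := le_one_div_mul_setIntegral_Ioc hab hf.neg (fun t ht => neg_le_neg (hc t ht))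
  simp only [Pi.neg_apply, integral_neg, mul_neg] at this
  exact neg_le_neg_iff.mp this

/-- **Smoothing step in the proof of Theorem 6.2.**
For `A, B ∈ ℝ` there is `C > 0` (depending only on `A` and `B`) such that for every locally
integrable `E : (0,∞) → ℝ` for which `x ↦ E(x) + x(A log x + B)` is nondecreasing on `[3,∞)`,
for all `x ≥ 3` and `0 < H ≤ x`:
`E(x) ≤ (1/H) ∫_x^{x+H} E(t) dt + C H log x`, and if moreover `x − H ≥ 3`,
`E(x) ≥ (1/H) ∫_{x−H}^x E(t) dt − C H log x`. -/
theorem stmt_12 (A B : ℝ) :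
    ∃ C : ℝ, 0 < C ∧ ∀ E : ℝ → ℝ,
      LocallyIntegrableOn E (Set.Ioi (0 : ℝ)) volume →
      MonotoneOn (fun x => E x + x * (A * Real.log x + B)) (Set.Ici (3 : ℝ)) →
      ∀ x : ℝ, 3 ≤ x → ∀ H : ℝ, 0 < H → H ≤ x →
        (E x ≤ (1 / H) * (∫ t in Set.Ioc x (x + H), E t) + C * H * Real.log x) ∧
        (3 ≤ x - H →
          (1 / H) * (∫ t in Set.Ioc (x - H) x, E t) - C * H * Real.log x ≤ E x) := by
  refine ⟨3 * |A| + |B| + 1, by positivity, fun E hE hmono x hx H hH hHx => ⟨?_, fun hxH => ?_⟩⟩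
  · have hbelow : ∀ t ∈ Ioc x (x + H), E x - (3 * |A| + |B| + 1) * H * log x ≤ E t :=
      fun t ht => sub_le_comm.mp <| sub_le_of_monotoneOn_add_mul_affine_log hmono hx ht.1.le
        (by linarith [ht.2]) hx (by linarith [ht.2])
    have hbound := le_one_div_mul_setIntegral_Ioc (by linarith)
      (hE.integrableOn_Ioc (by linarith)) hbelow
    rw [add_sub_cancel_left] at hbound
    linarith
  · have habove : ∀ t ∈ Ioc (x - H) x, E t ≤ E x + (3 * |A| + |B| + 1) * H * log x :=
      fun t ht => sub_le_iff_le_add'.mp <| sub_le_of_monotoneOn_add_mul_affine_log hmono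
        (by linarith [ht.1]) ht.2 (by linarith [ht.1]) hx (by linarith)
    have hbound := one_div_mul_setIntegral_Ioc_le (by linarith)
      (hE.integrableOn_Ioc (by linarith)) habove
    rw [sub_sub_cancel] at hbound
    linarith
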